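/- arXiv:2006.14070 — 2 statements merged into one kernel-verified Lean document; each statement's English description precedes it below -/
import Mathlib

section
/- For every n ≥ 3, there is no standard puzzle of shape 2×n with all pieces equal to C = (1,3,2,4); for n = 2 there is exactly one. -/
/-!
A piece with pattern `(1,3,2,4)` in columns `j, j+1` forces the zigzag
`f(0,j) < f(1,j+1) < f(0,j+1) < f(1,j)`. In particular the top entry of its right column is
below the bottom one, while the next piece needs the bottom entry of its left column below the
top one, so no two such pieces can be adjacent. For `n = 2` the zigzag is a chain through all
four values, which pins the puzzle down.
-/

/-- The rank (1-based) of entry `i` among the four entries of `q`. -/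
def puzzleRank {N : ℕ} (q : Fin 4 → Fin N) (i : Fin 4) : ℕ :=
  (Finset.univ.filter (fun k => q k ≤ q i)).card

/-- The pattern (order-isomorphism type) of the `j`-th piece of a 2×n array `f`,
read bottom-left, bottom-right, top-right, top-left. Row `0` is the bottom row. -/
def piece {n : ℕ} (f : Fin 2 × Fin n → Fin (2 * n)) (j : ℕ) (hj : j + 1 < n) :
    ℕ × ℕ × ℕ × ℕ :=
  let q : Fin 4 → Fin (2 * n) :=
    ![f (0, ⟨j, Nat.lt_of_succ_lt hj⟩), f (0, ⟨j + 1, hj⟩),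
      f (1, ⟨j + 1, hj⟩), f (1, ⟨j, Nat.lt_of_succ_lt hj⟩)]
  (puzzleRank q 0, puzzleRank q 1, puzzleRank q 2, puzzleRank q 3)

/-- The number of standard puzzles of shape 2×n all of whose pieces lie in `P`. -/
noncomputable def puzzleCount (n : ℕ) (P : Set (ℕ × ℕ × ℕ × ℕ)) : ℕ :=
  Nat.card {f : (Fin 2 × Fin n) ≃ Fin (2 * n) //
    ∀ j (hj : j + 1 < n), piece f j hj ∈ P}

lemma lt_of_puzzleRank_lt {N : ℕ} {q : Fin 4 → Fin N} {i j : Fin 4}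
    (h : puzzleRank q i < puzzleRank q j) : q i < q j := by
  by_contra! hji
  refine (Finset.card_le_card fun k hk => ?_).not_gt h
  simp only [Finset.mem_filter, Finset.mem_univ, true_and] at hk ⊢
  exact hk.trans hji

lemma lt_chain_of_puzzleRank_eq_1324 {N : ℕ} {q : Fin 4 → Fin N}
    (h : (puzzleRank q 0, puzzleRank q 1, puzzleRank q 2, puzzleRank q 3) = (1, 3, 2, 4)) :
    q 0 < q 2 ∧ q 2 < q 1 ∧ q 1 < q 3 := by
  simp only [Prod.mk.injEq] at h
  exact ⟨lt_of_puzzleRank_lt (by omega), lt_of_puzzleRank_lt (by omega),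
    lt_of_puzzleRank_lt (by omega)⟩

lemma lt_chain_of_piece_eq_1324 {n : ℕ} {f : Fin 2 × Fin n → Fin (2 * n)} {j : ℕ}
    {hj : j + 1 < n} (h : piece f j hj = (1, 3, 2, 4)) :
    f (0, ⟨j, Nat.lt_of_succ_lt hj⟩) < f (1, ⟨j + 1, hj⟩) ∧
    f (1, ⟨j + 1, hj⟩) < f (0, ⟨j + 1, hj⟩) ∧
    f (0, ⟨j + 1, hj⟩) < f (1, ⟨j, Nat.lt_of_succ_lt hj⟩) :=
  lt_chain_of_puzzleRank_eq_1324 h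

lemma not_piece_eq_1324_and_succ {n : ℕ} (f : Fin 2 × Fin n → Fin (2 * n)) (j : ℕ)
    (hj : j + 2 < n) :
    ¬ (piece f j (by omega) = (1, 3, 2, 4) ∧ piece f (j + 1) hj = (1, 3, 2, 4)) := by
  rintro ⟨hleft, hright⟩
  obtain ⟨-, top_lt_bottom, -⟩ := lt_chain_of_piece_eq_1324 hleft
  obtain ⟨h₁, h₂, h₃⟩ := lt_chain_of_piece_eq_1324 hright
  exact top_lt_bottom.not_gt (h₁.trans (h₂.trans h₃))

noncomputable def puzzle1324 : (Fin 2 × Fin 2) ≃ Fin (2 * 2) :=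
  Equiv.ofBijective (fun p => ![![0, 2], ![3, 1]] p.1 p.2) (by decide)

lemma piece_puzzle1324 : piece puzzle1324 0 one_lt_two = (1, 3, 2, 4) := by
  decide

lemma eq_puzzle1324_of_piece_eq {f : (Fin 2 × Fin 2) ≃ Fin (2 * 2)}
    (h : piece f 0 one_lt_two = (1, 3, 2, 4)) : f = puzzle1324 := by
  obtain ⟨h₁, h₂, h₃⟩ := lt_chain_of_piece_eq_1324 h
  simp only [Nat.zero_add, Fin.zero_eta, Fin.mk_one, Fin.lt_def] at h₁ h₂ h₃
  ext ⟨i, j⟩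
  fin_cases i <;> fin_cases j <;> simp [puzzle1324] <;> omega

lemma puzzleCount_two : puzzleCount 2 {(1, 3, 2, 4)} = 1 := by
  rw [puzzleCount, Nat.card_eq_one_iff_exists]
  refine ⟨⟨puzzle1324, fun j hj => ?_⟩, fun ⟨f, hf⟩ => Subtype.ext ?_⟩
  · obtain rfl : j = 0 := by omega
    exact piece_puzzle1324
  · exact eq_puzzle1324_of_piece_eq (hf 0 one_lt_two)

lemma puzzleCount_eq_zero_of_three_le {n : ℕ} (hn : 3 ≤ n) : puzzleCount n {(1, 3, 2, 4)} = 0 := by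
  rw [puzzleCount, Nat.card_eq_zero]
  exact Or.inl ⟨fun ⟨f, hf⟩ => not_piece_eq_1324_and_succ f 0 hn ⟨hf 0 _, hf 1 _⟩⟩

theorem stmt3 (n : ℕ) (hn : 2 ≤ n) :
    puzzleCount n {(1, 3, 2, 4)} = if n = 2 then 1 else 0 := by
  rcases hn.eq_or_lt with rfl | hn
  · exact puzzleCount_two
  · rw [if_neg hn.ne', puzzleCount_eq_zero_of_three_le hn]
end

section
/- For every n ≥ 2, the number of standard puzzles of shape 2×n with support {A, F} = {(1,2,3,4), (1,4,3,2)} equals n(n−1)/2 + 1. -/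
/-!
Write `b j = f (0, j)` and `t j = f (1, j)`. A piece `F` at `j` gives `t (j+1) < b (j+1)`, while
both patterns at `j + 1` need `b (j+1) < t (j+1)`; so only the last piece can be `F`. Either way
`f` increases along the hook `b 0, …, b (h-1), t (h-1), …, t 0` (with `h = n` or `h = n - 1`),
and a bijection onto `Fin (2n)` that increases along a chain is determined by its values off the
chain. Hence there is one all-`A` puzzle, and a puzzle ending in `F` is determined by its last
column `t (n-1) = n + x < b (n-1) = n + y`, where `x < y < n` is forced: `n(n-1)/2` choices.
-/

theorem Equiv.ext_of_strictMono_comp {α β ι : Type*} [LinearOrder ι] [WellFoundedLT ι]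
    [Preorder β] {f g : α ≃ β} {u : ι → α} (hf : StrictMono (f ∘ u))
    (hg : StrictMono (g ∘ u)) (h : ∀ a ∉ Set.range u, f a = g a) : f = g := by
  have hrange : Set.range (f ∘ u) = Set.range (g ∘ u) := by
    rw [Set.range_comp, Set.range_comp, ← compl_compl (Set.range u), f.image_compl,
      g.image_compl, Set.EqOn.image_eq (s := (Set.range u)ᶜ) fun a ha => h a ha]
  have hfg := (hf.range_inj hg).1 hrange
  refine Equiv.ext fun a => ?_
  by_cases ha : a ∈ Set.range u
  · obtain ⟨i, rfl⟩ := ha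
    exact congrFun hfg i
  · exact h a ha

theorem Fin.val_le_of_strictMono {m N : ℕ} {v : Fin m → Fin N} (hv : StrictMono v) (k : Fin m) :
    (k : ℕ) ≤ v k := by
  have hsub : (Finset.Iic k).image v ⊆ Finset.Iic (v k) :=
    Finset.image_subset_iff.2 fun i hi => Finset.mem_Iic.2 (hv.monotone (Finset.mem_Iic.1 hi))
  have := Finset.card_le_card hsub
  rwa [Finset.card_image_of_injective _ hv.injective, Fin.card_Iic, Fin.card_Iic,
    Nat.add_le_add_iff_right] at this

section Rank

variable {N : ℕ} (q : Fin 4 → Fin N)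

theorem one_le_puzzleRank (i : Fin 4) : 1 ≤ puzzleRank q i :=
  Finset.card_pos.2 ⟨i, Finset.mem_filter.2 ⟨Finset.mem_univ _, le_rfl⟩⟩

theorem puzzleRank_le_four (i : Fin 4) : puzzleRank q i ≤ 4 :=
  (Finset.card_filter_le _ _).trans_eq (Finset.card_fin 4)

theorem puzzleRank_lt_puzzleRank_iff (i k : Fin 4) :
    puzzleRank q i < puzzleRank q k ↔ q i < q k := by
  refine ⟨fun h => lt_of_not_ge fun hki => h.not_ge ?_, fun h => Finset.card_lt_card ?_⟩
  · exact Finset.card_le_card fun l hl => by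
      simp only [Finset.mem_filter] at hl ⊢
      exact ⟨hl.1, hl.2.trans hki⟩
  · refine (Finset.ssubset_iff_of_subset fun l hl => ?_).2 ⟨k, by simp [h]⟩
    simp only [Finset.mem_filter] at hl ⊢
    exact ⟨hl.1, hl.2.trans h.le⟩

theorem puzzleRanks_eq_A_iff :
    (puzzleRank q 0, puzzleRank q 1, puzzleRank q 2, puzzleRank q 3) = (1, 2, 3, 4) ↔
      q 0 < q 1 ∧ q 1 < q 2 ∧ q 2 < q 3 := by
  simp only [Prod.mk.injEq, ← puzzleRank_lt_puzzleRank_iff q]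
  have hlow := one_le_puzzleRank q 0
  have hhigh := puzzleRank_le_four q 3
  omega

theorem puzzleRanks_eq_F_iff :
    (puzzleRank q 0, puzzleRank q 1, puzzleRank q 2, puzzleRank q 3) = (1, 4, 3, 2) ↔
      q 0 < q 3 ∧ q 3 < q 2 ∧ q 2 < q 1 := by
  simp only [Prod.mk.injEq, ← puzzleRank_lt_puzzleRank_iff q]
  have hlow := one_le_puzzleRank q 0
  have hhigh := puzzleRank_le_four q 1
  omega

end Rank

def patternA : ℕ × ℕ × ℕ × ℕ := (1, 2, 3, 4)

def patternF : ℕ × ℕ × ℕ × ℕ := (1, 4, 3, 2)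

section Pieces

variable {n : ℕ} (f : Fin 2 × Fin n → Fin (2 * n)) (j : ℕ) (hj : j + 1 < n)

theorem piece_eq_patternA_iff :
    piece f j hj = patternA ↔
      f (0, ⟨j, by omega⟩) < f (0, ⟨j + 1, hj⟩) ∧ f (0, ⟨j + 1, hj⟩) < f (1, ⟨j + 1, hj⟩) ∧
        f (1, ⟨j + 1, hj⟩) < f (1, ⟨j, by omega⟩) :=
  puzzleRanks_eq_A_iff _

theorem piece_eq_patternF_iff :
    piece f j hj = patternF ↔
      f (0, ⟨j, by omega⟩) < f (1, ⟨j, by omega⟩) ∧ f (1, ⟨j, by omega⟩) < f (1, ⟨j + 1, hj⟩) ∧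
        f (1, ⟨j + 1, hj⟩) < f (0, ⟨j + 1, hj⟩) :=
  puzzleRanks_eq_F_iff _

end Pieces

def hookPath (n h : ℕ) (hh : h ≤ n) (k : Fin (2 * h)) : Fin 2 × Fin n :=
  if hk : (k : ℕ) < h then (0, ⟨k, by omega⟩) else (1, ⟨2 * h - 1 - k, by omega⟩)

theorem mem_range_hookPath {n h : ℕ} (hh : h ≤ n) (c : Fin 2 × Fin n) (hc : (c.2 : ℕ) < h) :
    c ∈ Set.range (hookPath n h hh) := by
  obtain ⟨r, j⟩ := c
  dsimp only at hc
  fin_cases r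
  · exact ⟨⟨j, by omega⟩, by simp [hookPath, hc]⟩
  · refine ⟨⟨2 * h - 1 - j, by omega⟩, ?_⟩
    simp only [hookPath]
    rw [dif_neg (by simp; omega)]
    ext <;> simp; omega

theorem Fin.strictMono_of_lt_add_one {m : ℕ} {β : Type*} [Preorder β] {v : Fin m → β}
    (hv : ∀ a (ha : a + 1 < m), v ⟨a, by omega⟩ < v ⟨a + 1, ha⟩) : StrictMono v := by
  cases m with
  | zero => exact fun a => a.elim0
  | succ m => exact Fin.strictMono_iff_lt_succ.2 fun i => hv i (by simp)

theorem strictMono_comp_hookPath {n h : ℕ} (hh : h ≤ n) (f : Fin 2 × Fin n → Fin (2 * n))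
    (hA : ∀ j (hj : j + 1 < h), piece f j (by omega) = patternA)
    (hturn : ∀ j (hj : j + 1 = h), f (0, ⟨j, by omega⟩) < f (1, ⟨j, by omega⟩)) :
    StrictMono (f ∘ hookPath n h hh) := by
  refine Fin.strictMono_of_lt_add_one fun a ha => ?_
  simp only [Function.comp_apply, hookPath]
  split_ifs with ha hb hb
  · exact ((piece_eq_patternA_iff f a _).1 (hA a hb)).1
  · have hidx : 2 * h - 1 - (a + 1) = a := by omega
    simp only [hidx]
    exact hturn a (by omega)
  · omega
  · have hidx : 2 * h - 1 - a = 2 * h - 2 - a + 1 := by omega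
    have hidx' : 2 * h - 1 - (a + 1) = 2 * h - 2 - a := by omega
    simp only [hidx, hidx']
    exact ((piece_eq_patternA_iff f _ _).1 (hA (2 * h - 2 - a) (by omega))).2.2

def supportAF : Set (ℕ × ℕ × ℕ × ℕ) := {patternA, patternF}

def AFPuzzle (n : ℕ) : Type :=
  {f : (Fin 2 × Fin n) ≃ Fin (2 * n) // ∀ j (hj : j + 1 < n), piece f j hj ∈ supportAF}

theorem piece_eq_patternA_of_add_two_lt {n : ℕ} {f : Fin 2 × Fin n → Fin (2 * n)}
    (hf : ∀ j (hj : j + 1 < n), piece f j hj ∈ supportAF) (j : ℕ) (hj : j + 2 < n) :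
    piece f j (by omega) = patternA := by
  refine (hf j _).resolve_right fun hF => ?_
  have hlt := ((piece_eq_patternF_iff f j _).1 hF).2.2
  rcases hf (j + 1) hj with hA | hF'
  · obtain ⟨h₁, h₂, h₃⟩ := (piece_eq_patternA_iff f (j + 1) hj).1 hA
    exact lt_asymm hlt (h₁.trans (h₂.trans h₃))
  · exact lt_asymm hlt ((piece_eq_patternF_iff f (j + 1) hj).1 hF').1

section Shape

variable {m : ℕ} (f : Fin 2 × Fin (m + 2) → Fin (2 * (m + 2)))

theorem strictMono_comp_hookPath_of_patternA
    (hA : ∀ j (hj : j + 1 < m + 2), piece f j hj = patternA) :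
    StrictMono (f ∘ hookPath (m + 2) (m + 2) le_rfl) :=
  strictMono_comp_hookPath _ f hA fun j hj => by
    obtain rfl : m + 1 = j := by omega
    exact ((piece_eq_patternA_iff f m (by omega)).1 (hA m (by omega))).2.1

theorem strictMono_comp_hookPath_of_patternF
    (hA : ∀ j (hj : j + 1 < m + 1), piece f j (by omega) = patternA)
    (hF : piece f m (by omega) = patternF) :
    StrictMono (f ∘ hookPath (m + 2) (m + 1) (by omega)) :=
  strictMono_comp_hookPath _ f hA fun j hj => by
    obtain rfl : m = j := by omega
    exact ((piece_eq_patternF_iff f m _).1 hF).1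

end Shape

def puzzleAFun (n : ℕ) (p : Fin 2 × Fin n) : Fin (2 * n) :=
  if p.1 = 0 then ⟨p.2, by omega⟩ else ⟨2 * n - 1 - p.2, by omega⟩

theorem puzzleAFun_injective (n : ℕ) : Function.Injective (puzzleAFun n) := by
  rintro ⟨r, a⟩ ⟨s, b⟩ h
  fin_cases r <;> fin_cases s <;> simp [puzzleAFun, Fin.ext_iff] at h ⊢ <;> omega

noncomputable def puzzleA (n : ℕ) : (Fin 2 × Fin n) ≃ Fin (2 * n) :=
  Equiv.ofBijective _ ((puzzleAFun_injective n).bijective_of_nat_card_le (by simp))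

theorem piece_puzzleA {n : ℕ} (j : ℕ) (hj : j + 1 < n) : piece (puzzleA n) j hj = patternA := by
  rw [piece_eq_patternA_iff]
  simp only [puzzleA, puzzleAFun, Equiv.ofBijective_apply, Fin.lt_def]
  simp
  omega

section PuzzleF

variable (m x y : ℕ) (hxy : x < y) (hy : y < m + 2)

-- The top row runs down through the values `≥ m + 1` other than `m + 2 + x` and `m + 2 + y`.
def puzzleFFun (p : Fin 2 × Fin (m + 2)) : Fin (2 * (m + 2)) :=
  if (p.2 : ℕ) = m + 1 then
    if p.1 = 0 then ⟨m + 2 + y, by omega⟩ else ⟨m + 2 + x, by omega⟩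
  else if p.1 = 0 then ⟨p.2, by omega⟩
  else
    let k := 2 * m + 1 - p.2
    if k < m + 2 + x then ⟨k, by omega⟩
    else if k + 1 < m + 2 + y then ⟨k + 1, by omega⟩ else ⟨k + 2, by omega⟩

theorem puzzleFFun_injective : Function.Injective (puzzleFFun m x y hxy hy) := by
  rintro ⟨r, a⟩ ⟨s, b⟩ h
  fin_cases r <;> fin_cases s <;> simp [puzzleFFun] at h <;> split_ifs at h <;>
    simp [Fin.ext_iff] at h ⊢ <;> omega

noncomputable def puzzleF : (Fin 2 × Fin (m + 2)) ≃ Fin (2 * (m + 2)) :=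
  Equiv.ofBijective _ ((puzzleFFun_injective m x y hxy hy).bijective_of_nat_card_le (by simp))

theorem piece_puzzleF_of_lt (j : ℕ) (hj : j < m) :
    piece (puzzleF m x y hxy hy) j (by omega) = patternA := by
  rw [piece_eq_patternA_iff]
  simp only [puzzleF, puzzleFFun, Equiv.ofBijective_apply, Fin.lt_def]
  split_ifs <;> simp <;> omega

theorem piece_puzzleF_self : piece (puzzleF m x y hxy hy) m (by omega) = patternF := by
  rw [piece_eq_patternF_iff]
  simp only [puzzleF, puzzleFFun, Equiv.ofBijective_apply, Fin.lt_def]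
  split_ifs <;> simp <;> omega

theorem piece_puzzleF_mem_supportAF (j : ℕ) (hj : j + 1 < m + 2) :
    piece (puzzleF m x y hxy hy) j hj ∈ supportAF := by
  rcases (by omega : j < m ∨ m = j) with hj | rfl
  · exact Or.inl (piece_puzzleF_of_lt m x y hxy hy j hj)
  · exact Or.inr (piece_puzzleF_self m x y hxy hy)

end PuzzleF

theorem eq_puzzleA_of_forall_piece_eq_patternA {m : ℕ}
    {f : (Fin 2 × Fin (m + 2)) ≃ Fin (2 * (m + 2))}
    (hA : ∀ j (hj : j + 1 < m + 2), piece f j hj = patternA) : f = puzzleA (m + 2) :=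
  Equiv.ext_of_strictMono_comp (strictMono_comp_hookPath_of_patternA f hA)
    (strictMono_comp_hookPath_of_patternA _ piece_puzzleA)
    fun c hc => (hc (mem_range_hookPath _ c c.2.2)).elim

theorem exists_eq_puzzleF_of_piece_eq_patternF {m : ℕ}
    {f : (Fin 2 × Fin (m + 2)) ≃ Fin (2 * (m + 2))}
    (hA : ∀ j (hj : j + 1 < m + 1), piece f j (by omega) = patternA)
    (hF : piece f m (by omega) = patternF) :
    ∃ x y, ∃ (hxy : x < y) (hy : y < m + 2), f = puzzleF m x y hxy hy := by
  have hmono := strictMono_comp_hookPath_of_patternF f hA hF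
  have htm : m + 1 ≤ (f (1, ⟨m, by omega⟩) : ℕ) := by
    have hidx : 2 * (m + 1) - 1 - (m + 1) = m := by omega
    simpa [hookPath, hidx] using Fin.val_le_of_strictMono hmono ⟨m + 1, by omega⟩
  obtain ⟨-, hlt, hlast⟩ := (piece_eq_patternF_iff f m _).1 hF
  rw [Fin.lt_def] at hlt hlast
  have hbound := (f (0, ⟨m + 1, by omega⟩)).isLt
  refine ⟨(f (1, ⟨m + 1, by omega⟩) : ℕ) - (m + 2), (f (0, ⟨m + 1, by omega⟩) : ℕ) - (m + 2),
    by omega, by omega, ?_⟩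
  refine Equiv.ext_of_strictMono_comp hmono
    (strictMono_comp_hookPath_of_patternF _
      (fun j _ => piece_puzzleF_of_lt _ _ _ _ _ j (by omega)) (piece_puzzleF_self ..))
    fun c hc => ?_
  obtain ⟨r, j⟩ := c
  obtain rfl : j = ⟨m + 1, by omega⟩ :=
    Fin.ext (by by_contra hj; exact hc (mem_range_hookPath _ _ (by simp at hj ⊢; omega)))
  fin_cases r <;> ext <;> simp [puzzleF, puzzleFFun] at hlt hlast ⊢ <;> omega

noncomputable def afPuzzleOfParam (m : ℕ) : Option (Σ y : Fin (m + 2), Fin y) → AFPuzzle (m + 2)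
  | none => ⟨puzzleA (m + 2), fun j hj => Or.inl (piece_puzzleA j hj)⟩
  | some ⟨y, x⟩ => ⟨puzzleF m x y x.2 y.2, piece_puzzleF_mem_supportAF m x y x.2 y.2⟩

theorem afPuzzleOfParam_injective (m : ℕ) : Function.Injective (afPuzzleOfParam m) := by
  intro p q h
  have hlast : ∀ r : Fin 2, ((afPuzzleOfParam m p).1 (r, ⟨m + 1, by omega⟩) : ℕ) =
      (afPuzzleOfParam m q).1 (r, ⟨m + 1, by omega⟩) := fun r => by rw [h]
  have h0 := hlast 0
  have h1 := hlast 1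
  rcases p with _ | ⟨y, x⟩ <;> rcases q with _ | ⟨y', x'⟩ <;>
    simp [afPuzzleOfParam, puzzleA, puzzleAFun, puzzleF, puzzleFFun] at h0 h1
  · rfl
  · omega
  · omega
  · obtain rfl : y = y' := Fin.ext (by omega)
    obtain rfl : x = x' := Fin.ext (by omega)
    rfl

theorem afPuzzleOfParam_surjective (m : ℕ) : Function.Surjective (afPuzzleOfParam m) := by
  rintro ⟨f, hf⟩
  have hA := piece_eq_patternA_of_add_two_lt hf
  rcases hf m (by omega) with hlast | hlast
  · refine ⟨none, Subtype.ext (eq_puzzleA_of_forall_piece_eq_patternA fun j hj => ?_).symm⟩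
    rcases (by omega : j < m ∨ m = j) with hj | rfl
    · exact hA j (by omega)
    · exact hlast
  · obtain ⟨x, y, hxy, hy, rfl⟩ :=
      exists_eq_puzzleF_of_piece_eq_patternF (fun j hj => hA j (by omega)) hlast
    exact ⟨some ⟨⟨y, hy⟩, ⟨x, hxy⟩⟩, rfl⟩

theorem card_option_sigma_fin (n : ℕ) :
    Nat.card (Option (Σ y : Fin n, Fin y)) = n * (n - 1) / 2 + 1 := by
  rw [Nat.card_eq_fintype_card, Fintype.card_option, Fintype.card_sigma]
  simp [Fin.sum_univ_eq_sum_range (fun i => i), Finset.sum_range_id]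

theorem stmt7 (n : ℕ) (hn : 2 ≤ n) :
    puzzleCount n {(1, 2, 3, 4), (1, 4, 3, 2)} = n * (n - 1) / 2 + 1 := by
  obtain ⟨m, rfl⟩ := Nat.exists_eq_add_of_le' hn
  calc puzzleCount (m + 2) {(1, 2, 3, 4), (1, 4, 3, 2)}
      = Nat.card (AFPuzzle (m + 2)) := rfl
    _ = Nat.card (Option (Σ y : Fin (m + 2), Fin y)) :=
      (Nat.card_congr (Equiv.ofBijective _
        ⟨afPuzzleOfParam_injective m, afPuzzleOfParam_surjective m⟩)).symm
    _ = (m + 2) * (m + 2 - 1) / 2 + 1 := card_option_sigma_fin _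
end
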